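/- arXiv:1910.11196 — 3 statements merged into one kernel-verified Lean document; each statement's English description precedes it below -/
import Mathlib

section
/- The edge-subgraph expansion formula of Hoede and Li fails in general: for G = K₃ with edge set M = {ab, ac}, one has C(G;x) ≠ C(G−M;x) + Σ_{r=2}^{|M|} (−1)^r Σ_{S ⊆ M, |S| = r(r−1)/2} (r−1) x^r C*(G_S;x). Concretely, the left side is 1 + 3x + 3x² + x³ while the right side is 1 + 3x + 3x² + 2x³. -/
/-! In a complete graph every vertex set is a clique and every induced subgraph is again
complete, so `C(Kₙ;x) = (1+x)ⁿ` and `C*(G_S;x) = (1+x)^|V(G_S)|`. For `M = {ab, ac}` in `K₃`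
only `r = 2` contributes, through `S = {ab}` and `S = {ac}`, each with `G_S` a single vertex;
with `C(K₃ - M;x) = 1 + 3x + x²` the right side becomes `1 + 3x + x² + 2x²(1+x)`, whose
`x³`-coefficient is `2` rather than `1`. -/

open Polynomial Finset

/-- The clique polynomial `C(G;x) = Σ_k a_k(G) x^k`, where `a_k(G)` is the number of
`k`-cliques of `G` (with `a_0 = 1`). -/
noncomputable def cliquePoly {V : Type*} [Fintype V] [DecidableEq V]
    (G : SimpleGraph V) [DecidableRel G.Adj] : Polynomial ℤ :=
  ∑ k ∈ Finset.range (Fintype.card V + 1),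
    ((G.cliqueFinset k).card : ℤ) • (X : Polynomial ℤ) ^ k

instance {V : Type*} [DecidableEq V] (G : SimpleGraph V) [DecidableRel G.Adj]
    (M : Finset (Sym2 V)) : DecidableRel (G.deleteEdges ↑M).Adj := fun a b =>
  decidable_of_iff (G.Adj a b ∧ ¬ s(a,b) ∈ M) (by simp [SimpleGraph.deleteEdges_adj])

instance {V : Type*} (G : SimpleGraph V) [DecidableRel G.Adj] (s : Set V)
    [DecidablePred (· ∈ s)] : DecidableRel (G.induce s).Adj :=
  fun a b => ‹DecidableRel G.Adj› a b

/-- The set of endpoints of the edges in `S`. -/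
def endpoints {V : Type*} [Fintype V] [DecidableEq V] (S : Finset (Sym2 V)) : Finset V :=
  S.biUnion fun e => Finset.univ.filter (· ∈ e)

/-- The set of common neighbors of all endpoints of edges in `S`;
`G.induce (commonNbrs G S)` is the graph `G_S`. -/
def commonNbrs {V : Type*} (G : SimpleGraph V) (S : Finset (Sym2 V)) : Set V :=
  {v | ∀ e ∈ S, ∀ w ∈ e, G.Adj v w}

instance {V : Type*} [Fintype V] [DecidableEq V] (G : SimpleGraph V) [DecidableRel G.Adj]
    (S : Finset (Sym2 V)) : DecidablePred (· ∈ commonNbrs G S) := fun v =>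
  inferInstanceAs (Decidable (∀ e ∈ S, ∀ w ∈ e, G.Adj v w))

/-- `C*(G_S;x)`: the clique polynomial of `G_S` if `⟨S⟩` is a clique of `G`, else `0`. -/
noncomputable def cstar {V : Type*} [Fintype V] [DecidableEq V]
    (G : SimpleGraph V) [DecidableRel G.Adj] (S : Finset (Sym2 V)) : Polynomial ℤ :=
  if G.IsClique (↑(endpoints S) : Set V) then cliquePoly (G.induce (commonNbrs G S)) else 0

namespace SimpleGraph

lemma cliqueFinset_top {V : Type*} [Fintype V] [DecidableEq V]
    [DecidableRel (⊤ : SimpleGraph V).Adj] (k : ℕ) :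
    (⊤ : SimpleGraph V).cliqueFinset k = univ.powersetCard k := by
  ext s
  simp [isNClique_iff, IsClique.top]

end SimpleGraph

open SimpleGraph

lemma cliquePoly_eq_of_eq_top {V : Type*} [Fintype V] [DecidableEq V] {G : SimpleGraph V}
    [DecidableRel G.Adj] (hG : G = ⊤) : cliquePoly G = (1 + X) ^ Fintype.card V := by
  subst hG
  rw [cliquePoly, add_comm 1 X, add_pow]
  refine sum_congr rfl fun k _ => ?_
  rw [cliqueFinset_top, card_powersetCard, card_univ, one_pow, mul_one, zsmul_eq_mul, mul_comm]
  simp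

lemma cstar_top {V : Type*} [Fintype V] [DecidableEq V] (S : Finset (Sym2 V)) :
    cstar (⊤ : SimpleGraph V) S = (1 + X) ^ Fintype.card (commonNbrs ⊤ S) := by
  rw [cstar, if_pos (IsClique.top _)]
  exact cliquePoly_eq_of_eq_top (induce_eq_top.2 (IsClique.top _))

local notation "K₃" => (⊤ : SimpleGraph (Fin 3))

local notation "M₀" => ({s((0 : Fin 3), 1), s((0 : Fin 3), 2)} : Finset (Sym2 (Fin 3)))

lemma cliquePoly_completeGraph_fin_three : cliquePoly K₃ = 1 + 3 * X + 3 * X ^ 2 + X ^ 3 := by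
  rw [cliquePoly_eq_of_eq_top rfl, Fintype.card_fin]
  ring

lemma cliquePoly_completeGraph_fin_three_deleteEdges :
    cliquePoly ((K₃).deleteEdges ↑M₀) = 1 + 3 * X + X ^ 2 := by
  have h0 : #(((K₃).deleteEdges ↑M₀).cliqueFinset 0) = 1 := by decide
  have h1 : #(((K₃).deleteEdges ↑M₀).cliqueFinset 1) = 3 := by decide
  have h2 : #(((K₃).deleteEdges ↑M₀).cliqueFinset 2) = 1 := by decide
  have h3 : #(((K₃).deleteEdges ↑M₀).cliqueFinset 3) = 0 := by decide
  simp only [cliquePoly, Fintype.card_fin, sum_range_succ, sum_range_zero, h0, h1, h2, h3]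
  simp

lemma cstar_completeGraph_fin_three_edge {a b : Fin 3} (hab : a ≠ b) :
    cstar K₃ {s(a, b)} = 1 + X := by
  have : Fintype.card (commonNbrs K₃ {s(a, b)}) = 1 := by revert a b; decide
  rw [cstar_top, this, pow_one]

lemma hoedeLi_expansion_completeGraph_fin_three :
    cliquePoly ((K₃).deleteEdges ↑M₀) +
        ∑ r ∈ Icc 2 #M₀, ∑ S ∈ (M₀).powerset.filter (fun S => #S = r * (r - 1) / 2),
          ((-1 : ℤ) ^ r * ((r : ℤ) - 1)) • ((X : ℤ[X]) ^ r * cstar K₃ S) =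
      1 + 3 * X + 3 * X ^ 2 + 2 * X ^ 3 := by
  have hM : #M₀ = 2 := by decide
  have hedges :
      (M₀).powerset.filter (fun S => #S = 2 * (2 - 1) / 2) = {{s(0, 1)}, {s(0, 2)}} := by
    decide
  rw [cliquePoly_completeGraph_fin_three_deleteEdges, hM, Icc_self, sum_singleton, hedges,
    sum_pair (by decide), cstar_completeGraph_fin_three_edge (by decide),
    cstar_completeGraph_fin_three_edge (by decide)]
  norm_num
  ring

/-- Counterexample to Hoede–Li's Theorem 3.4: for `G = K₃` and `M = {ab, ac}` the
edge-subgraph expansion fails. -/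
theorem stmt2 :
    cliquePoly (⊤ : SimpleGraph (Fin 3)) ≠
      (cliquePoly ((⊤ : SimpleGraph (Fin 3)).deleteEdges
          ↑({s((0 : Fin 3), 1), s((0 : Fin 3), 2)} : Finset (Sym2 (Fin 3)))) +
        ∑ r ∈ Finset.Icc 2 ({s((0 : Fin 3), 1), s((0 : Fin 3), 2)} : Finset (Sym2 (Fin 3))).card,
          ∑ S ∈ ({s((0 : Fin 3), 1), s((0 : Fin 3), 2)} : Finset (Sym2 (Fin 3))).powerset.filter
              (fun S => S.card = r * (r - 1) / 2),
            ((-1 : ℤ) ^ r * ((r : ℤ) - 1)) • ((X : Polynomial ℤ) ^ r *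
              cstar (⊤ : SimpleGraph (Fin 3)) S)) ∧
    cliquePoly (⊤ : SimpleGraph (Fin 3)) = 1 + 3 * X + 3 * X ^ 2 + X ^ 3 ∧
    (cliquePoly ((⊤ : SimpleGraph (Fin 3)).deleteEdges
          ↑({s((0 : Fin 3), 1), s((0 : Fin 3), 2)} : Finset (Sym2 (Fin 3)))) +
        ∑ r ∈ Finset.Icc 2 ({s((0 : Fin 3), 1), s((0 : Fin 3), 2)} : Finset (Sym2 (Fin 3))).card,
          ∑ S ∈ ({s((0 : Fin 3), 1), s((0 : Fin 3), 2)} : Finset (Sym2 (Fin 3))).powerset.filter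
              (fun S => S.card = r * (r - 1) / 2),
            ((-1 : ℤ) ^ r * ((r : ℤ) - 1)) • ((X : Polynomial ℤ) ^ r *
              cstar (⊤ : SimpleGraph (Fin 3)) S)) =
      1 + 3 * X + 3 * X ^ 2 + 2 * X ^ 3 := by
  refine ⟨?_, cliquePoly_completeGraph_fin_three, hoedeLi_expansion_completeGraph_fin_three⟩
  rw [cliquePoly_completeGraph_fin_three, hoedeLi_expansion_completeGraph_fin_three]
  intro h
  simpa using congrArg (coeff · 3) h
end

section
/- Every k-clique of G that is not a k-clique of G − e (for an edge e = uv) contains both u and v, and the map sending such a clique to its intersection with the common neighborhood of u and v is a bijection onto the (k−2)-cliques of G_{e}. -/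
/-!
A `k`-clique of `G` stops being a clique of `G − uv` exactly when it contains both `u` and `v`.
All its other vertices are then common neighbours of `u` and `v`, so deleting `u` and `v` leaves a
`(k − 2)`-clique of `G_e`, and adding `u` and `v` back to any clique of `G_e` inverts this.
-/
open Polynomial Finset

instance {V : Type*} (G : SimpleGraph V) [DecidableRel G.Adj] (u v : V) :
    DecidablePred (· ∈ ({w | G.Adj u w ∧ G.Adj v w} : Set V)) := fun w =>
  inferInstanceAs (Decidable (G.Adj u w ∧ G.Adj v w))

namespace SimpleGraph

variable {V : Type*} {G : SimpleGraph V} {u v : V}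

lemma isClique_deleteEdges_edge_iff (huv : u ≠ v) {s : Set V} :
    (G.deleteEdges {s(u, v)}).IsClique s ↔ G.IsClique s ∧ ¬(u ∈ s ∧ v ∈ s) := by
  refine ⟨fun hs => ⟨hs.mono (deleteEdges_le _), fun ⟨hu, hv⟩ => ?_⟩, fun ⟨hs, hnot⟩ => ?_⟩
  · exact ((deleteEdges_adj ..).1 (hs hu hv huv)).2 rfl
  · intro a ha b hb hab
    refine (deleteEdges_adj ..).2 ⟨hs ha hb hab, ?_⟩
    rw [Set.mem_singleton_iff, Sym2.eq_iff]
    rintro (⟨rfl, rfl⟩ | ⟨rfl, rfl⟩)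
    exacts [hnot ⟨ha, hb⟩, hnot ⟨hb, ha⟩]

section Finite

variable [Fintype V] [DecidableEq V] [DecidableRel G.Adj]

lemma mem_cliqueFinset_sdiff_deleteEdges_edge_iff (huv : u ≠ v) {k : ℕ} {T : Finset V} :
    T ∈ G.cliqueFinset k \ (G.deleteEdges ↑({s(u, v)} : Finset (Sym2 V))).cliqueFinset k ↔
      G.IsNClique k T ∧ u ∈ T ∧ v ∈ T := by
  simp only [Finset.mem_sdiff, mem_cliqueFinset_iff, isNClique_iff, Finset.coe_singleton,
    isClique_deleteEdges_edge_iff huv, Finset.mem_coe]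
  tauto

end Finite

section CommonNeighbors

variable [DecidableEq V]

lemma IsNClique.insert_insert_map_subtype (huv : G.Adj u v) {n : ℕ}
    {S : Finset (G.commonNeighbors u v)} (hS : (G.induce (G.commonNeighbors u v)).IsNClique n S) :
    G.IsNClique (n + 2) (insert u (insert v (S.map (.subtype _)))) := by
  have hS' := (isNClique_induce_iff _ _ _).1 hS
  have hcommon {b : V} (hb : b ∈ S.map (.subtype _)) := G.mem_commonNeighbors.1
    (Finset.property_of_mem_map_subtype S hb)
  refine (hS'.insert fun b hb => (hcommon hb).2).insert fun b hb => ?_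
  rcases Finset.mem_insert.1 hb with rfl | hb
  exacts [huv, (hcommon hb).1]

variable [DecidablePred (· ∈ G.commonNeighbors u v)]

lemma filter_mem_commonNeighbors {T : Finset V} (hT : G.IsClique (T : Set V)) (hu : u ∈ T)
    (hv : v ∈ T) : T.filter (· ∈ G.commonNeighbors u v) = (T.erase u).erase v := by
  ext w
  simp only [Finset.mem_filter, Finset.mem_erase, mem_commonNeighbors]
  refine ⟨fun ⟨hw, huw, hvw⟩ => ⟨hvw.ne', huw.ne', hw⟩, fun ⟨hwv, hwu, hw⟩ => ⟨hw, ?_, ?_⟩⟩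
  exacts [hT hu hw (Ne.symm hwu), hT hv hw (Ne.symm hwv)]

lemma IsNClique.subtype_commonNeighbors (huv : u ≠ v) {k : ℕ} {T : Finset V}
    (hT : G.IsNClique k T) (hu : u ∈ T) (hv : v ∈ T) :
    (G.induce (G.commonNeighbors u v)).IsNClique (k - 2)
      (T.subtype (· ∈ G.commonNeighbors u v)) := by
  rw [isNClique_induce_iff, Finset.subtype_map, filter_mem_commonNeighbors hT.1 hu hv]
  simpa [Nat.sub_sub] using
    (hT.erase_of_mem hu).erase_of_mem (Finset.mem_erase.2 ⟨huv.symm, hv⟩)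

lemma insert_insert_map_subtype_commonNeighbors (huv : u ≠ v) {T : Finset V}
    (hT : G.IsClique (T : Set V)) (hu : u ∈ T) (hv : v ∈ T) :
    insert u (insert v ((T.subtype (· ∈ G.commonNeighbors u v)).map (.subtype _))) = T := by
  rw [Finset.subtype_map, filter_mem_commonNeighbors hT hu hv,
    Finset.insert_erase (Finset.mem_erase.2 ⟨huv.symm, hv⟩), Finset.insert_erase hu]

lemma subtype_commonNeighbors_insert_insert_map (S : Finset (G.commonNeighbors u v)) :
    (insert u (insert v (S.map (.subtype _)))).subtype (· ∈ G.commonNeighbors u v) = S := by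
  ext w
  have hwu : (w : V) ≠ u := ne_of_mem_of_not_mem w.2 (G.notMem_commonNeighbors_left u v)
  have hwv : (w : V) ≠ v := ne_of_mem_of_not_mem w.2 (G.notMem_commonNeighbors_right u v)
  simp [hwu, hwv]

end CommonNeighbors

end SimpleGraph

open SimpleGraph in
/-- Every `k`-clique of `G` that is not a `k`-clique of `G − e` contains both `u` and `v`,
and intersecting with the common neighborhood of `u` and `v` is a bijection onto the
`(k−2)`-cliques of `G_e`. -/
theorem stmt7 {V : Type*} [Fintype V] [DecidableEq V] (G : SimpleGraph V) [DecidableRel G.Adj]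
    (u v : V) (huv : G.Adj u v) (k : ℕ) (hk : 2 ≤ k) :
    (∀ T ∈ G.cliqueFinset k \
        (G.deleteEdges ↑({s(u, v)} : Finset (Sym2 V))).cliqueFinset k, u ∈ T ∧ v ∈ T) ∧
    Set.BijOn (fun T : Finset V => T.subtype (· ∈ ({w | G.Adj u w ∧ G.Adj v w} : Set V)))
      ↑(G.cliqueFinset k \ (G.deleteEdges ↑({s(u, v)} : Finset (Sym2 V))).cliqueFinset k)
      ↑((G.induce ({w | G.Adj u w ∧ G.Adj v w} : Set V)).cliqueFinset (k - 2)) := by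
  have hmem {T : Finset V} :=
    mem_cliqueFinset_sdiff_deleteEdges_edge_iff (G := G) (k := k) (T := T) huv.ne
  refine ⟨fun T hT => (hmem.1 hT).2, ?_⟩
  refine Set.InvOn.bijOn (f' := fun S => insert u (insert v (S.map (.subtype _))))
    ⟨?_, ?_⟩ ?_ ?_
  · intro T hT
    obtain ⟨hT, hu, hv⟩ := hmem.1 hT
    exact insert_insert_map_subtype_commonNeighbors huv.ne hT.1 hu hv
  · intro S _
    exact subtype_commonNeighbors_insert_insert_map S
  · intro T hT
    obtain ⟨hT, hu, hv⟩ := hmem.1 hT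
    rw [Finset.mem_coe, mem_cliqueFinset_iff]
    exact hT.subtype_commonNeighbors huv.ne hu hv
  · intro S hS
    rw [Finset.mem_coe, mem_cliqueFinset_iff] at hS
    refine hmem.2 ⟨?_, Finset.mem_insert_self _ _,
      Finset.mem_insert_of_mem (Finset.mem_insert_self _ _)⟩
    have hS' := hS.insert_insert_map_subtype huv
    rwa [Nat.sub_add_cancel hk] at hS'
end

section
/- Let G be a simple graph and M a set of edges whose endpoints induce a clique of G and which contains all edges of that clique. Then C(G;x) = C(G−M;x) + Σ_{r=2}^{p} (−1)^r (r−1) x^r Σ_{S ⊆ M, |S| = r(r−1)/2, ⟨S⟩ an r-clique} C(G_S;x), where p is the number of vertices of the clique induced by M. -/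
open Polynomial Finset

/-!
Both sides are sums of `x ^ #K` over cliques `K` of `G`. Write `P` for the clique spanned by `M`.
The cliques of `G − M` are those with `#(K ∩ P) ≤ 1`. Since `M` contains every edge of `G` inside
`P`, the edge sets `S` of the inner sum are exactly the edge sets of the `r`-subsets `R ⊆ P`, and
`x ^ r * C(G_S)` enumerates the cliques `K ⊇ R`. Exchanging the sums, each clique `K` receives the
weight `∑_{R ⊆ K ∩ P, #R ≥ 2} (-1) ^ #R * (#R - 1)`, which is `1` if `#(K ∩ P) ≥ 2` and `0`
otherwise.
-/

section Alternating

variable {α : Type*} [DecidableEq α]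

theorem sum_powerset_neg_one_pow_mul_card_sub_one (T : Finset α) :
    ∑ R ∈ T.powerset, (-1 : ℤ) ^ #R * (#R - 1) = if #T ≤ 1 then -1 else 0 := by
  rcases T.eq_empty_or_nonempty with rfl | ⟨a, ha⟩
  · simp
  -- pairing `R` with `insert a R` collapses the sum to `-∑ R, (-1) ^ #R`
  rw [← insert_erase ha, sum_powerset_insert (notMem_erase a T), ← sum_add_distrib]
  have hstep : ∀ R ∈ (T.erase a).powerset,
      (-1 : ℤ) ^ #R * (#R - 1) + (-1) ^ #(insert a R) * (#(insert a R) - 1) = -(-1) ^ #R := by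
    intro R hR
    rw [card_insert_of_notMem fun haR => notMem_erase a T (mem_powerset.mp hR haR)]
    push_cast
    ring
  rw [sum_congr rfl hstep, sum_neg_distrib, sum_powerset_neg_one_pow_card,
    card_insert_of_notMem (notMem_erase a T)]
  have hsingle : #(T.erase a) + 1 ≤ 1 ↔ T.erase a = ∅ := by rw [← card_eq_zero]; omega
  simp only [hsingle]
  split_ifs <;> simp

theorem sum_powerset_filter_two_le (T : Finset α) :
    ∑ R ∈ T.powerset with 2 ≤ #R, (-1 : ℤ) ^ #R * (#R - 1) = if 2 ≤ #T then 1 else 0 := by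
  have hsmall : ∑ R ∈ T.powerset with ¬2 ≤ #R, (-1 : ℤ) ^ #R * (#R - 1) = -1 := by
    rw [sum_eq_single_of_mem ∅ (by simp)]
    · simp
    · intro R hR hne
      have hR1 : #R = 1 := by
        have := card_pos.mpr (nonempty_iff_ne_empty.mpr hne)
        simp only [mem_filter] at hR
        omega
      simp [hR1]
  have htotal := sum_filter_add_sum_filter_not T.powerset (fun R => 2 ≤ #R)
    fun R => (-1 : ℤ) ^ #R * (#R - 1)
  rw [hsmall, sum_powerset_neg_one_pow_mul_card_sub_one] at htotal
  split_ifs at htotal ⊢ <;> omega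

end Alternating

section Cliques

variable {V : Type*} [Fintype V] [DecidableEq V] (G : SimpleGraph V) [DecidableRel G.Adj]

def cliques : Finset (Finset V) := {K | G.IsClique (K : Set V)}

@[simp]
theorem mem_cliques {K : Finset V} : K ∈ cliques G ↔ G.IsClique (K : Set V) := by
  simp [cliques]

theorem cliquePoly_eq_sum_cliques : cliquePoly G = ∑ K ∈ cliques G, (X : ℤ[X]) ^ #K := by
  rw [cliquePoly, ← sum_fiberwise_of_maps_to (g := card) (t := range (Fintype.card V + 1))
    fun K _ => mem_range.mpr (Nat.lt_succ_of_le (card_le_univ K))]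
  refine sum_congr rfl fun k _ => ?_
  have hk : {K ∈ cliques G | #K = k} = G.cliqueFinset k := by
    ext K
    simp [SimpleGraph.isNClique_iff]
  rw [hk, sum_congr rfl fun K hK => by rw [(G.mem_cliqueFinset_iff.mp hK).card_eq], sum_const,
    natCast_zsmul]

theorem cliquePoly_induce (s : Set V) [DecidablePred (· ∈ s)] :
    cliquePoly (G.induce s) = ∑ K ∈ cliques G with ∀ v ∈ K, v ∈ s, (X : ℤ[X]) ^ #K := by
  have hmap : (cliques (G.induce s)).map (mapEmbedding (.subtype _)).toEmbedding =
      {K ∈ cliques G | ∀ v ∈ K, v ∈ s} := by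
    ext K
    simp only [mem_map, mem_filter, mem_cliques, SimpleGraph.isClique_induce_iff,
      RelEmbedding.coe_toEmbedding, mapEmbedding_apply]
    constructor
    · rintro ⟨K, hK, rfl⟩
      exact ⟨by simpa using hK, map_subtype_subset K⟩
    · rintro ⟨hK, hKs⟩
      refine ⟨K.subtype (· ∈ s), ?_, subtype_map_of_mem hKs⟩
      convert hK
      ext v
      simpa using hKs v
  rw [cliquePoly_eq_sum_cliques, ← hmap, sum_map]
  simp

end Cliques

section Endpoints

variable {V : Type*} [Fintype V] [DecidableEq V]

@[simp]
theorem mem_endpoints {S : Finset (Sym2 V)} {v : V} : v ∈ endpoints S ↔ ∃ e ∈ S, v ∈ e := by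
  simp [endpoints]

theorem endpoints_mono {S T : Finset (Sym2 V)} (h : S ⊆ T) : endpoints S ⊆ endpoints T :=
  biUnion_subset_biUnion_of_subset_left _ h

theorem mem_commonNbrs_iff {G : SimpleGraph V} {S : Finset (Sym2 V)} {v : V} :
    v ∈ commonNbrs G S ↔ ∀ w ∈ endpoints S, G.Adj v w := by
  simp only [commonNbrs, Set.mem_ofPred_eq, mem_endpoints, forall_exists_index, and_imp]
  exact ⟨fun h w e he hw => h e he w hw, fun h e he w hw => h w e he hw⟩

theorem X_pow_card_mul_cliquePoly_commonNbrs (G : SimpleGraph V) [DecidableRel G.Adj]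
    {S : Finset (Sym2 V)} (hS : G.IsClique (↑(endpoints S) : Set V)) :
    (X : ℤ[X]) ^ #(endpoints S) * cliquePoly (G.induce (commonNbrs G S)) =
      ∑ K ∈ cliques G with endpoints S ⊆ K, (X : ℤ[X]) ^ #K := by
  set R := endpoints S
  have hdisj : ∀ Q : Finset V, (∀ v ∈ Q, v ∈ commonNbrs G S) → Disjoint R Q := fun Q hQ =>
    disjoint_left.mpr fun v hvR hvQ => G.loopless.irrefl v (mem_commonNbrs_iff.mp (hQ v hvQ) v hvR)
  rw [cliquePoly_induce, mul_sum]
  refine sum_nbij' (R ∪ ·) (· \ R) ?_ ?_ ?_ ?_ ?_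
  · intro Q hQ
    simp only [mem_filter, mem_cliques] at hQ
    simp only [mem_filter, mem_cliques, subset_union_left, and_true, coe_union]
    refine Set.pairwise_union.mpr ⟨hS, hQ.1, fun a ha b hb _ => ?_⟩
    have hba := mem_commonNbrs_iff.mp (hQ.2 b hb) a ha
    exact ⟨hba.symm, hba⟩
  · intro K hK
    simp only [mem_filter, mem_cliques] at hK
    simp only [mem_filter, mem_cliques, mem_sdiff, and_imp]
    refine ⟨hK.1.subset (by simp), fun v hvK hvR => mem_commonNbrs_iff.mpr fun w hw =>
      hK.1 (mem_coe.mpr hvK) (mem_coe.mpr (hK.2 hw)) (by rintro rfl; exact hvR hw)⟩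
  · intro Q hQ
    exact union_sdiff_cancel_left (hdisj Q (mem_filter.mp hQ).2)
  · intro K hK
    exact union_sdiff_of_subset (mem_filter.mp hK).2
  · intro Q hQ
    rw [card_union_of_disjoint (hdisj Q (mem_filter.mp hQ).2), pow_add]

end Endpoints

section EdgesOn

variable {V : Type*} [DecidableEq V]

def edgesOn (R : Finset V) : Finset (Sym2 V) := R.offDiag.image Sym2.mk.uncurry

theorem mem_edgesOn {R : Finset V} {e : Sym2 V} : e ∈ edgesOn R ↔ ¬e.IsDiag ∧ ∀ v ∈ e, v ∈ R := by
  induction e using Sym2.ind with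
  | h a b => aesop (add norm edgesOn)

theorem card_edgesOn (R : Finset V) : #(edgesOn R) = (#R).choose 2 :=
  Sym2.card_image_offDiag R

variable [Fintype V]

theorem endpoints_edgesOn {R : Finset V} (hR : 1 < #R) : endpoints (edgesOn R) = R := by
  ext v
  simp only [mem_endpoints, mem_edgesOn]
  refine ⟨fun ⟨e, ⟨_, he⟩, hv⟩ => he v hv, fun hv => ?_⟩
  obtain ⟨w, hw, hwv⟩ := exists_mem_ne hR v
  refine ⟨s(v, w), ⟨Sym2.mk_isDiag_iff.not.mpr hwv.symm, ?_⟩, Sym2.mem_mk_left v w⟩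
  intro u hu
  rcases Sym2.mem_iff.mp hu with rfl | rfl <;> assumption

theorem subset_edgesOn_endpoints {S : Finset (Sym2 V)} (hS : ∀ e ∈ S, ¬e.IsDiag) :
    S ⊆ edgesOn (endpoints S) := fun e he =>
  mem_edgesOn.mpr ⟨hS e he, fun _ hv => mem_endpoints.mpr ⟨e, he, hv⟩⟩

end EdgesOn

section CliqueEdges

variable {V : Type*} [Fintype V] [DecidableEq V] {G : SimpleGraph V} [DecidableRel G.Adj]
  {M : Finset (Sym2 V)}

theorem edgesOn_subset_of_isClique (hall : ∀ e ∈ G.edgeFinset, (∀ w ∈ e, w ∈ endpoints M) → e ∈ M)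
    {R : Finset V} (hRM : R ⊆ endpoints M) (hR : G.IsClique (R : Set V)) : edgesOn R ⊆ M := by
  intro e he
  obtain ⟨hdiag, heR⟩ := mem_edgesOn.mp he
  refine hall e ?_ fun w hw => hRM (heR w hw)
  induction e using Sym2.ind with
  | h a b =>
    exact G.mem_edgeFinset.mpr (hR (heR a (Sym2.mem_mk_left a b)) (heR b (Sym2.mem_mk_right a b))
      (Sym2.mk_isDiag_iff.not.mp hdiag))

theorem sum_filter_isNClique_endpoints {β : Type*} [AddCommMonoid β]
    (hM : (↑M : Set (Sym2 V)) ⊆ G.edgeSet) (hclique : G.IsClique (↑(endpoints M) : Set V))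
    (hall : ∀ e ∈ G.edgeFinset, (∀ w ∈ e, w ∈ endpoints M) → e ∈ M)
    {r : ℕ} (hr : 2 ≤ r) (f : Finset V → β) :
    ∑ S ∈ M.powerset with #S = r * (r - 1) / 2 ∧ G.IsNClique r (endpoints S), f (endpoints S) =
      ∑ R ∈ (endpoints M).powersetCard r, f R := by
  refine sum_nbij' endpoints edgesOn ?_ ?_ ?_ ?_ fun _ _ => rfl
  · intro S hS
    simp only [mem_filter, mem_powerset] at hS
    exact mem_powersetCard.mpr ⟨endpoints_mono hS.1, hS.2.2.card_eq⟩
  · intro R hR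
    obtain ⟨hRM, hRr⟩ := mem_powersetCard.mp hR
    have hRclique := hclique.subset (coe_subset.mpr hRM)
    simp only [mem_filter, mem_powerset, endpoints_edgesOn (hRr ▸ hr), card_edgesOn, hRr,
      Nat.choose_two_right]
    exact ⟨edgesOn_subset_of_isClique hall hRM hRclique, trivial, hRclique, hRr⟩
  · intro S hS
    simp only [mem_filter, mem_powerset] at hS
    obtain ⟨hSM, hScard, hSr⟩ := hS
    refine (eq_of_subset_of_card_le (subset_edgesOn_endpoints fun e he => ?_) ?_).symm
    · exact G.not_isDiag_of_mem_edgeSet (hM (hSM he))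
    · rw [card_edgesOn, hSr.card_eq, hScard, Nat.choose_two_right]
  · intro R hR
    obtain ⟨-, hRr⟩ := mem_powersetCard.mp hR
    exact endpoints_edgesOn (by omega)

theorem cliques_deleteEdges
    (hall : ∀ e ∈ G.edgeFinset, (∀ w ∈ e, w ∈ endpoints M) → e ∈ M) :
    cliques (G.deleteEdges M) = {K ∈ cliques G | #(K ∩ endpoints M) ≤ 1} := by
  ext K
  simp only [mem_filter, mem_cliques, card_le_one, mem_inter]
  constructor
  · intro hK
    refine ⟨hK.mono (G.deleteEdges_le _), fun a ha b hb => ?_⟩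
    by_contra hab
    obtain ⟨hadj, hnot⟩ :=
      SimpleGraph.deleteEdges_adj.mp (hK (mem_coe.mpr ha.1) (mem_coe.mpr hb.1) hab)
    refine hnot (hall _ (G.mem_edgeFinset.mpr hadj) fun w hw => ?_)
    rcases Sym2.mem_iff.mp hw with rfl | rfl
    exacts [ha.2, hb.2]
  · rintro ⟨hK, hKM⟩ a ha b hb hab
    refine SimpleGraph.deleteEdges_adj.mpr ⟨hK ha hb hab, fun hmem => hab ?_⟩
    exact hKM a ⟨ha, mem_endpoints.mpr ⟨_, hmem, Sym2.mem_mk_left a b⟩⟩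
      b ⟨hb, mem_endpoints.mpr ⟨_, hmem, Sym2.mem_mk_right a b⟩⟩

end CliqueEdges

section Reindexing

variable {α β : Type*} [AddCommMonoid β]

theorem sum_Icc_sum_powersetCard (P : Finset α) (a : ℕ) (f : Finset α → β) :
    ∑ r ∈ Icc a #P, ∑ R ∈ P.powersetCard r, f R = ∑ R ∈ P.powerset with a ≤ #R, f R := by
  rw [← sum_fiberwise_of_maps_to (g := card) (t := Icc a #P) fun R hR => by
    simp only [mem_filter, mem_powerset] at hR
    exact mem_Icc.mpr ⟨hR.2, card_le_card hR.1⟩]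
  refine sum_congr rfl fun r hr => sum_congr ?_ fun _ _ => rfl
  have har := (mem_Icc.mp hr).1
  ext R
  simp only [mem_powersetCard, mem_filter, mem_powerset]
  grind

theorem sum_powerset_sum_superset_comm [DecidableEq α] (P : Finset α) (𝒦 : Finset (Finset α))
    (p : Finset α → Prop) [DecidablePred p] (f : Finset α → Finset α → β) :
    ∑ R ∈ P.powerset with p R, ∑ K ∈ 𝒦 with R ⊆ K, f R K =
      ∑ K ∈ 𝒦, ∑ R ∈ (K ∩ P).powerset with p R, f R K :=
  sum_comm' fun R K => by
    simp only [mem_filter, mem_powerset, subset_inter_iff]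
    tauto

end Reindexing

/-- Corrected edge-subgraph expansion (polynomial form), valid when `M` consists of all
the edges of a clique of `G` on `p` vertices. -/
theorem stmt11 {V : Type*} [Fintype V] [DecidableEq V] (G : SimpleGraph V) [DecidableRel G.Adj]
    (M : Finset (Sym2 V)) (hM : (↑M : Set (Sym2 V)) ⊆ G.edgeSet)
    (hclique : G.IsClique (↑(endpoints M) : Set V))
    (hall : ∀ e ∈ G.edgeFinset, (∀ w ∈ e, w ∈ endpoints M) → e ∈ M) :
    cliquePoly G =
      cliquePoly (G.deleteEdges ↑M) +
        ∑ r ∈ Finset.Icc 2 (endpoints M).card,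
          ((-1 : ℤ) ^ r * ((r : ℤ) - 1)) • ((X : Polynomial ℤ) ^ r *
            ∑ S ∈ M.powerset.filter
                (fun S => S.card = r * (r - 1) / 2 ∧ G.IsNClique r (endpoints S)),
              cliquePoly (G.induce (commonNbrs G S))) := by
  have hterm : ∀ r ∈ Icc 2 #(endpoints M),
      ((-1 : ℤ) ^ r * ((r : ℤ) - 1)) • ((X : ℤ[X]) ^ r *
        ∑ S ∈ M.powerset with #S = r * (r - 1) / 2 ∧ G.IsNClique r (endpoints S),
          cliquePoly (G.induce (commonNbrs G S))) =
      ∑ R ∈ (endpoints M).powersetCard r, ∑ K ∈ cliques G with R ⊆ K,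
        ((-1 : ℤ) ^ #R * ((#R : ℤ) - 1)) • (X : ℤ[X]) ^ #K := by
    intro r hr
    rw [mul_sum, ← sum_filter_isNClique_endpoints hM hclique hall (mem_Icc.mp hr).1, smul_sum]
    refine sum_congr rfl fun S hS => ?_
    have hSr := (mem_filter.mp hS).2.2
    rw [← hSr.card_eq, X_pow_card_mul_cliquePoly_commonNbrs G hSr.isClique, smul_sum]
  have hsplit : cliquePoly G = cliquePoly (G.deleteEdges M) +
      ∑ K ∈ cliques G, (if 2 ≤ #(K ∩ endpoints M) then 1 else 0 : ℤ) • (X : ℤ[X]) ^ #K := by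
    rw [cliquePoly_eq_sum_cliques, cliquePoly_eq_sum_cliques, cliques_deleteEdges hall,
      sum_filter, ← sum_add_distrib]
    refine sum_congr rfl fun K _ => ?_
    split_ifs <;> first | omega | simp
  rw [hsplit, sum_congr rfl hterm, sum_Icc_sum_powersetCard, sum_powerset_sum_superset_comm]
  simp_rw [← sum_smul, sum_powerset_filter_two_le]
end
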